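/- Let G be a finite group and ρ : G → U(d) a group homomorphism, with character χ(g) = tr(ρ(g)). Then the family (ρ(g))_{g∈G} averages Hom(t,t) correctly — i.e., for every f ∈ Hom(t,t), (1/|G|)·∑_{g∈G} f(ρ(g)) = ∫_{U(d)} f(U) dU — if and only if (1/|G|)·∑_{g∈G} |χ(g)|^{2t} = ∫_{U(d)} |tr(U)|^{2t} dU. -/

import Mathlib

/-!
Collect all monomials of bidegree `(t, t)` into one vector `φ(U)`; its Gram kernel is
`⟪φ U, φ V⟫ = |tr(U⁻¹ V)|^{2t}`. Since the coordinates of `φ` span `Hom(t,t)`, a probability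
measure `ν` on `U(d)` averages `Hom(t,t)` correctly iff its moment vector `∫ φ dν` equals the
Haar one. By left invariance of `μ`, every inner product involving the Haar moment vector is
`∫ |tr U|^{2t} dμ`, so the squared distance between the two moment vectors is the frame potential
`∫∫ |tr(U⁻¹ V)|^{2t} dν dν` minus that Haar value. For the uniform measure on `ρ(G)`,
`ρ(g)⁻¹ ρ(h) = ρ(g⁻¹ h)` collapses the frame potential to the average of `|χ|^{2t}`.
-/

open MeasureTheory

noncomputable section

/-- `U(d)`: the group of `d × d` complex unitary matrices. -/
abbrev UG (d : ℕ) := Matrix.unitaryGroup (Fin d) ℂ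

instance (d : ℕ) : MeasurableSpace (UG d) := borel _
instance (d : ℕ) : BorelSpace (UG d) := ⟨rfl⟩

/-- `Hom(r,s)`: the complex span of the monomial functions on `U(d)` that are homogeneous of
degree `r` in the entries of `U` and of degree `s` in the entries of `U*` (conjugates). -/
def homSpace (d r s : ℕ) : Submodule ℂ (UG d → ℂ) :=
  Submodule.span ℂ
    {f : UG d → ℂ | ∃ (i j : Fin r → Fin d) (p q : Fin s → Fin d),
      f = fun U : UG d => (∏ k, (U : Matrix (Fin d) (Fin d) ℂ) (i k) (j k)) *
        ∏ k, (starRingEnd ℂ) ((U : Matrix (Fin d) (Fin d) ℂ) (p k) (q k))}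

/-- A nonempty finite subset `X ⊆ U(d)` is a unitary `t`-design (with respect to the Haar
probability measure `μ`) if it averages every `f ∈ Hom(t,t)` correctly. -/
def IsUnitaryDesign (d t : ℕ) (μ : Measure (UG d)) (X : Finset (UG d)) : Prop :=
  X.Nonempty ∧ ∀ f ∈ homSpace d t t,
    (1 / (X.card : ℂ)) * ∑ U ∈ X, f U = ∫ U, f U ∂μ

/-- `|tr(U* M)|²`, the squared trace inner product of two unitaries. -/
def trIP {d : ℕ} (U M : UG d) : ℝ :=
  ‖Matrix.trace (star (U : Matrix (Fin d) (Fin d) ℂ) *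
    (M : Matrix (Fin d) (Fin d) ℂ))‖ ^ 2

open ComplexConjugate

namespace Matrix

instance {n 𝕜 : Type*} [Fintype n] [DecidableEq n] [RCLike 𝕜] :
    CompactSpace (unitaryGroup n 𝕜) :=
  isCompact_iff_compactSpace.mp <|
    (isCompact_univ_pi fun _ => isCompact_univ_pi fun _ => isCompact_closedBall (0 : 𝕜) 1)
      |>.of_isClosed_subset (isClosed_unitary (R := Matrix n n 𝕜)) fun _ hU i _ j _ => by
        simpa using entry_norm_bound_of_unitary hU i j

variable {n R : Type*}

def entryProd [CommMonoid R] {t : ℕ} (A : Matrix n n R) (x : (Fin t → n) × (Fin t → n)) : R :=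
  ∏ k, A (x.1 k) (x.2 k)

theorem sum_star_entryProd_mul_entryProd [Fintype n] [CommSemiring R] [StarRing R] (t : ℕ)
    (A B : Matrix n n R) :
    ∑ x : (Fin t → n) × (Fin t → n), star (entryProd A x) * entryProd B x =
      trace (Aᴴ * B) ^ t := by
  have htrace : trace (Aᴴ * B) = ∑ ab : n × n, star (A ab.1 ab.2) * B ab.1 ab.2 := by
    rw [Fintype.sum_prod_type, trace, Finset.sum_comm]
    simp [mul_apply]
  rw [htrace, Fintype.sum_pow]
  refine Fintype.sum_equiv (Equiv.arrowProdEquivProdArrow _ _ _).symm _ _ fun x => ?_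
  simp [entryProd, Finset.prod_mul_distrib, star_prod]

end Matrix

open Matrix

section Monomials

variable {n : Type*}

abbrev MonomialIndex (n : Type*) (t : ℕ) :=
  ((Fin t → n) × (Fin t → n)) × ((Fin t → n) × (Fin t → n))

def monomialVec (t : ℕ) (A : Matrix n n ℂ) : EuclideanSpace ℂ (MonomialIndex n t) :=
  WithLp.toLp 2 fun x => entryProd A x.1 * conj (entryProd A x.2)

theorem inner_monomialVec [Fintype n] (t : ℕ) (A B : Matrix n n ℂ) :
    inner ℂ (monomialVec t A) (monomialVec t B) = (‖trace (Aᴴ * B)‖ ^ (2 * t) : ℝ) := by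
  have hsum := sum_star_entryProd_mul_entryProd t A B
  calc inner ℂ (monomialVec t A) (monomialVec t B)
      = ∑ x, ∑ y, conj (entryProd A x) * entryProd B x *
          conj (conj (entryProd A y) * entryProd B y) := by
        rw [PiLp.inner_apply, Fintype.sum_prod_type]
        simp only [monomialVec, RCLike.inner_apply', map_mul, Complex.conj_conj]
        exact Finset.sum_congr rfl fun _ _ => Finset.sum_congr rfl fun _ _ => by ring
    _ = trace (Aᴴ * B) ^ t * conj (trace (Aᴴ * B) ^ t) := by
        rw [← Finset.sum_mul_sum, ← map_sum, ← hsum]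
        rfl
    _ = _ := by rw [Complex.mul_conj', norm_pow, pow_mul']; push_cast; ring

theorem inner_monomialVec_unitary [Fintype n] [DecidableEq n] (t : ℕ) (U V : unitaryGroup n ℂ) :
    inner ℂ (monomialVec t (U : Matrix n n ℂ)) (monomialVec t (V : Matrix n n ℂ)) =
      (‖trace ((U⁻¹ * V : unitaryGroup n ℂ) : Matrix n n ℂ)‖ ^ (2 * t) : ℝ) := by
  rw [inner_monomialVec, UnitaryGroup.mul_apply, UnitaryGroup.inv_apply, star_eq_conjTranspose]

theorem continuous_monomialVec (t : ℕ) : Continuous (monomialVec t : Matrix n n ℂ → _) :=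
  (PiLp.continuous_toLp 2 _).comp <| continuous_pi fun _ => by
    unfold entryProd; fun_prop

end Monomials

theorem homSpace_eq_span_monomialVec (d t : ℕ) :
    homSpace d t t = Submodule.span ℂ
      (Set.range fun x (U : UG d) => monomialVec t (U : Matrix (Fin d) (Fin d) ℂ) x) := by
  refine congrArg _ (Set.ext fun f => ⟨?_, ?_⟩)
  · rintro ⟨i, j, p, q, rfl⟩
    exact ⟨((i, j), (p, q)), by simp [monomialVec, entryProd, map_prod]⟩
  · rintro ⟨x, rfl⟩
    exact ⟨x.1.1, x.1.2, x.2.1, x.2.2, by simp [monomialVec, entryProd, map_prod]⟩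

theorem continuous_of_mem_homSpace {d t : ℕ} {f : UG d → ℂ} (hf : f ∈ homSpace d t t) :
    Continuous f := by
  rw [homSpace_eq_span_monomialVec] at hf
  induction hf using Submodule.span_induction with
  | mem _ hx =>
    obtain ⟨x, rfl⟩ := hx
    exact (continuous_apply x).comp <| (PiLp.continuous_ofLp 2 _).comp <|
      (continuous_monomialVec t).comp continuous_subtype_val
  | zero => exact continuous_const
  | add _ _ _ _ hf hg => exact hf.add hg
  | smul c _ _ hf => exact hf.const_smul c

theorem Continuous.integrable_of_compactSpace {X E : Type*} [TopologicalSpace X] [CompactSpace X]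
    [MeasurableSpace X] [OpensMeasurableSpace X] [NormedAddCommGroup E] {f : X → E}
    (hf : Continuous f) (ν : Measure X) [IsFiniteMeasure ν] : Integrable f ν :=
  hf.integrable_of_hasCompactSupport (HasCompactSupport.of_compactSpace f)

theorem inner_integral_integral {X 𝕜 E : Type*} [MeasurableSpace X] [RCLike 𝕜]
    [NormedAddCommGroup E] [InnerProductSpace 𝕜 E] [NormedSpace ℝ E] [CompleteSpace E]
    {ν ν' : Measure X} {f g : X → E} (hf : Integrable f ν) (hg : Integrable g ν') :
    inner 𝕜 (∫ x, f x ∂ν) (∫ y, g y ∂ν') = ∫ y, ∫ x, inner 𝕜 (f x) (g y) ∂ν ∂ν' := by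
  rw [← integral_inner hg]
  congr 1; funext y
  rw [← inner_conj_symm, ← integral_inner hf, ← integral_conj]
  simp_rw [inner_conj_symm]

section Moments

variable {d : ℕ}

theorem integrable_monomialVec (t : ℕ) (ν : Measure (UG d)) [IsFiniteMeasure ν] :
    Integrable (fun U : UG d => monomialVec t (U : Matrix (Fin d) (Fin d) ℂ)) ν :=
  ((continuous_monomialVec t).comp continuous_subtype_val).integrable_of_compactSpace ν

def momentVec (t : ℕ) (ν : Measure (UG d)) : EuclideanSpace ℂ (MonomialIndex (Fin d) t) :=
  ∫ U, monomialVec t (U : Matrix (Fin d) (Fin d) ℂ) ∂ν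

theorem momentVec_apply (t : ℕ) (ν : Measure (UG d)) [IsFiniteMeasure ν]
    (x : MonomialIndex (Fin d) t) :
    momentVec t ν x = ∫ U, monomialVec t (U : Matrix (Fin d) (Fin d) ℂ) x ∂ν :=
  eval_integral_piLp (integrable_piLp_iff.mp (integrable_monomialVec t ν)) x

def framePotential (t : ℕ) (ν : Measure (UG d)) : ℝ :=
  ∫ V, ∫ U, ‖trace ((U⁻¹ * V : UG d) : Matrix (Fin d) (Fin d) ℂ)‖ ^ (2 * t) ∂ν ∂ν

theorem inner_momentVec_self (t : ℕ) (ν : Measure (UG d)) [IsFiniteMeasure ν] :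
    inner ℂ (momentVec t ν) (momentVec t ν) = framePotential t ν := by
  rw [momentVec, inner_integral_integral (integrable_monomialVec t ν) (integrable_monomialVec t ν)]
  simp only [inner_monomialVec_unitary, integral_complex_ofReal, framePotential]

variable (μ : Measure (UG d)) [μ.IsHaarMeasure]

theorem integral_norm_trace_inv_mul_pow (V : UG d) (k : ℕ) :
    ∫ U, ‖trace ((U⁻¹ * V : UG d) : Matrix (Fin d) (Fin d) ℂ)‖ ^ k ∂μ =
      ∫ U, ‖trace (U : Matrix (Fin d) (Fin d) ℂ)‖ ^ k ∂μ := by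
  rw [← integral_mul_left_eq_self _ V]
  simp_rw [_root_.mul_inv_rev, inv_mul_cancel_right]
  congr 1; funext U
  rw [UnitaryGroup.inv_apply, star_eq_conjTranspose, trace_conjTranspose, norm_star]

variable [IsProbabilityMeasure μ]

theorem inner_momentVec_haar (t : ℕ) (ν : Measure (UG d)) [IsProbabilityMeasure ν] :
    inner ℂ (momentVec t μ) (momentVec t ν) =
      (∫ U, ‖trace (U : Matrix (Fin d) (Fin d) ℂ)‖ ^ (2 * t) ∂μ : ℝ) := by
  rw [momentVec, momentVec,
    inner_integral_integral (integrable_monomialVec t μ) (integrable_monomialVec t ν)]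
  simp only [inner_monomialVec_unitary, integral_complex_ofReal, integral_norm_trace_inv_mul_pow,
    integral_const, probReal_univ, one_smul]

theorem norm_momentVec_sub_sq (t : ℕ) (ν : Measure (UG d)) [IsProbabilityMeasure ν] :
    ‖momentVec t ν - momentVec t μ‖ ^ 2 =
      framePotential t ν - ∫ U, ‖trace (U : Matrix (Fin d) (Fin d) ℂ)‖ ^ (2 * t) ∂μ := by
  rw [@norm_sub_sq ℂ, @norm_sq_eq_re_inner ℂ, @norm_sq_eq_re_inner ℂ _ _ _ _ (momentVec t μ),
    inner_momentVec_self, inner_momentVec_haar μ t μ, inner_re_symm, inner_momentVec_haar μ t ν]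
  simp only [RCLike.re_to_complex, Complex.ofReal_re]
  ring

end Moments

section Designs

variable {d : ℕ}

theorem forall_mem_homSpace_integral_eq_iff (t : ℕ) (ν ν' : Measure (UG d)) [IsFiniteMeasure ν]
    [IsFiniteMeasure ν'] :
    (∀ f ∈ homSpace d t t, ∫ U, f U ∂ν = ∫ U, f U ∂ν') ↔ momentVec t ν = momentVec t ν' := by
  have integrable {f} (hf : f ∈ homSpace d t t) (ν : Measure (UG d)) [IsFiniteMeasure ν] :
      Integrable f ν :=
    (continuous_of_mem_homSpace hf).integrable_of_compactSpace ν
  rw [homSpace_eq_span_monomialVec] at integrable ⊢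
  refine ⟨fun h => PiLp.ext fun x => ?_, fun h f hf => ?_⟩
  · rw [momentVec_apply, momentVec_apply]
    exact h _ (Submodule.subset_span ⟨x, rfl⟩)
  induction hf using Submodule.span_induction with
  | mem _ hx =>
    obtain ⟨x, rfl⟩ := hx
    rw [← momentVec_apply, ← momentVec_apply, h]
  | zero => simp
  | add f g hf hg ihf ihg =>
    simp only [Pi.add_apply]
    rw [integral_add (integrable hf ν) (integrable hg ν),
      integral_add (integrable hf ν') (integrable hg ν'), ihf, ihg]
  | smul c f _ ihf =>
    simp only [Pi.smul_apply]
    rw [integral_smul, integral_smul, ihf]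

theorem forall_mem_homSpace_integral_eq_haar_iff (μ : Measure (UG d)) [μ.IsHaarMeasure]
    [IsProbabilityMeasure μ] (t : ℕ) (ν : Measure (UG d)) [IsProbabilityMeasure ν] :
    (∀ f ∈ homSpace d t t, ∫ U, f U ∂ν = ∫ U, f U ∂μ) ↔
      framePotential t ν = ∫ U, ‖trace (U : Matrix (Fin d) (Fin d) ℂ)‖ ^ (2 * t) ∂μ := by
  rw [forall_mem_homSpace_integral_eq_iff, ← sub_eq_zero, ← norm_eq_zero, ← sq_eq_zero_iff,
    norm_momentVec_sub_sq, sub_eq_zero]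

end Designs

section AverageMeasure

open scoped ENNReal

variable {ι X : Type*} [Fintype ι] [MeasurableSpace X]

def averageMeasure (x : ι → X) : Measure X :=
  (Fintype.card ι : ℝ≥0∞)⁻¹ • ∑ i, Measure.dirac (x i)

instance [Nonempty ι] (x : ι → X) : IsProbabilityMeasure (averageMeasure x) :=
  ⟨by simp [averageMeasure, ENNReal.inv_mul_cancel]⟩

theorem integral_averageMeasure [MeasurableSingletonClass X] {E : Type*} [NormedAddCommGroup E]
    [NormedSpace ℝ E] [CompleteSpace E] (x : ι → X) (f : X → E) :
    ∫ y, f y ∂averageMeasure x = (Fintype.card ι : ℝ)⁻¹ • ∑ i, f (x i) := by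
  rw [averageMeasure, integral_smul_measure,
    integral_finsetSum_measure fun i _ => integrable_dirac enorm_lt_top]
  simp only [integral_dirac, ENNReal.toReal_inv, ENNReal.toReal_natCast]

end AverageMeasure

theorem framePotential_averageMeasure_monoidHom {d : ℕ} (t : ℕ) {G : Type*} [Group G]
    [Fintype G] (ρ : G →* UG d) :
    framePotential t (averageMeasure ρ) =
      (Fintype.card G : ℝ)⁻¹ * ∑ g, ‖trace (ρ g : Matrix (Fin d) (Fin d) ℂ)‖ ^ (2 * t) := by
  have hcard : (Fintype.card G : ℝ) ≠ 0 := Nat.cast_ne_zero.mpr Fintype.card_ne_zero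
  have hsum (h : G) : ∑ g, ‖trace (((ρ g)⁻¹ * ρ h : UG d) : Matrix (Fin d) (Fin d) ℂ)‖ ^ (2 * t) =
      ∑ g, ‖trace (ρ g : Matrix (Fin d) (Fin d) ℂ)‖ ^ (2 * t) := by
    simp_rw [← map_inv, ← map_mul]
    exact Fintype.sum_equiv ((Equiv.inv G).trans (Equiv.mulRight h)) _ _ fun _ => rfl
  simp only [framePotential, integral_averageMeasure, smul_eq_mul, hsum, Finset.sum_const,
    Finset.card_univ, nsmul_eq_mul]
  field_simp

theorem stmt_19 (d t : ℕ)
    (μ : Measure (UG d)) [μ.IsHaarMeasure] [IsProbabilityMeasure μ]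
    (G : Type) [Group G] [Fintype G] (ρ : G →* UG d) :
    (∀ f ∈ homSpace d t t,
        (1 / (Fintype.card G : ℂ)) * ∑ g : G, f (ρ g) = ∫ U, f U ∂μ) ↔
      (1 / (Fintype.card G : ℝ)) *
          ∑ g : G, ‖Matrix.trace ((ρ g : Matrix (Fin d) (Fin d) ℂ))‖ ^ (2 * t)
        = ∫ U, ‖Matrix.trace (U : Matrix (Fin d) (Fin d) ℂ)‖ ^ (2 * t) ∂μ := by
  have haverage (f : UG d → ℂ) :
      ∫ U, f U ∂averageMeasure ρ = (1 / (Fintype.card G : ℂ)) * ∑ g : G, f (ρ g) := by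
    rw [integral_averageMeasure, Complex.real_smul]
    push_cast
    ring
  simp_rw [← haverage, one_div, ← framePotential_averageMeasure_monoidHom]
  exact forall_mem_homSpace_integral_eq_haar_iff μ t (averageMeasure ρ)
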